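/- Let P be a non-degenerate elliptical distribution on ℝ^d and let 𝓛 be a set of fewer than (d² + d)/2 one-dimensional subspaces of ℝ^d. Then there exists a non-degenerate elliptical distribution Q ≠ P on ℝ^d with P_L = Q_L for all L ∈ 𝓛. -/

import Mathlib

open MeasureTheory

/-- The characteristic function of a measure on `ℝ^d`. -/
noncomputable def cf {d : ℕ} (P : Measure (EuclideanSpace ℝ (Fin d)))
    (ξ : EuclideanSpace ℝ (Fin d)) : ℂ :=
  ∫ x, Complex.exp (((inner ℝ x ξ : ℝ) : ℂ) * Complex.I) ∂P

/-- The quadratic form `ξᵀ M ξ`. -/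
noncomputable def qf {d : ℕ} (M : Matrix (Fin d) (Fin d) ℝ)
    (ξ : EuclideanSpace ℝ (Fin d)) : ℝ :=
  dotProduct (fun i => ξ i) (M.mulVec (fun i => ξ i))

/-- `P` is an elliptical distribution with location `μ`, scatter matrix `Sig`
and generator `ψ`. -/
def IsElliptical {d : ℕ} (P : Measure (EuclideanSpace ℝ (Fin d)))
    (μ : EuclideanSpace ℝ (Fin d)) (Sig : Matrix (Fin d) (Fin d) ℝ) (ψ : ℝ → ℂ) : Prop :=
  IsProbabilityMeasure P ∧ Sig.PosSemidef ∧ ContinuousOn ψ (Set.Ici 0) ∧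
    ∀ ξ, cf P ξ = Complex.exp (((inner ℝ μ ξ : ℝ) : ℂ) * Complex.I) * ψ (qf Sig ξ)

/-- A measure on `ℝ^d` is non-degenerate if it is not supported in any affine
hyperplane `{z | y·z = c}` with `y ≠ 0`. -/
def Nondegenerate {d : ℕ} (P : Measure (EuclideanSpace ℝ (Fin d))) : Prop :=
  ∀ y : EuclideanSpace ℝ (Fin d), y ≠ 0 → ∀ c : ℝ,
    P {z | (inner ℝ y z : ℝ) = c} ≠ 1

/-- The projection of `P` onto the line spanned by `x`: the pushforward of `P`
under the orthogonal projection onto `span {x}`. -/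
noncomputable def projLine {d : ℕ} (P : Measure (EuclideanSpace ℝ (Fin d)))
    (x : EuclideanSpace ℝ (Fin d)) :
    Measure (Submodule.span ℝ ({x} : Set (EuclideanSpace ℝ (Fin d)))) :=
  P.map ((Submodule.span ℝ {x}).orthogonalProjectionOnto)

/-!
Non-degeneracy forces the scatter matrix `Σ` to be positive definite. Pick a nonzero vector
`v_L` on each line `L ∈ 𝓛`: the conditions `v_Lᵀ S v_L = 0` are fewer than `(d² + d)/2` linear
conditions on a symmetric matrix `S`, so some `S ≠ 0` satisfies all of them, and `Σ' = Σ + εS` is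
still positive definite for some small `ε ≠ 0`. Writing `Σ' = C Σ Cᵀ` with `C` invertible, the
pushforward `Q` of `P` under `x ↦ μ + C (x - μ)` is elliptical with parameters `(μ, Σ', ψ)` and
non-degenerate. The characteristic functions of `P` and `Q` agree on every line of `𝓛`, hence so
do the projections. Finally, `Q = P` would give `ψ (a s) = ψ (b s)` for all `s ≥ 0` with
`a = wᵀ Σ w ≠ b = wᵀ Σ' w`; continuity of `ψ` at `0` then makes `ψ` constant, so the
characteristic function of `P` is a pure phase in the direction `w` and `P` is carried by a
hyperplane.
-/

open Complex Filter Topology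
open scoped RealInnerProductSpace

lemma cf_eq_charFun {d : ℕ} (P : Measure (EuclideanSpace ℝ (Fin d))) : cf P = charFun P := rfl

section QuadraticForm

open Matrix

variable {d : ℕ}

lemma qf_eq_inner (M : Matrix (Fin d) (Fin d) ℝ) (ξ : EuclideanSpace ℝ (Fin d)) :
    qf M ξ = ⟪ξ, toEuclideanCLM (𝕜 := ℝ) M ξ⟫ :=
  (inner_toEuclideanCLM M ξ ξ).symm

lemma continuous_qf (M : Matrix (Fin d) (Fin d) ℝ) : Continuous (qf M) := by
  simp_rw [funext (qf_eq_inner M)]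
  fun_prop

lemma qf_smul (M : Matrix (Fin d) (Fin d) ℝ) (t : ℝ) (ξ : EuclideanSpace ℝ (Fin d)) :
    qf M (t • ξ) = t ^ 2 * qf M ξ := by
  simp only [qf_eq_inner, map_smul, real_inner_smul_left, real_inner_smul_right]
  ring

lemma qf_zero (M : Matrix (Fin d) (Fin d) ℝ) : qf M 0 = 0 := by
  simpa using qf_smul M 0 0

lemma qf_add (M N : Matrix (Fin d) (Fin d) ℝ) (ξ : EuclideanSpace ℝ (Fin d)) :
    qf (M + N) ξ = qf M ξ + qf N ξ := by
  simp [qf, add_mulVec]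

lemma qf_smul_matrix (t : ℝ) (M : Matrix (Fin d) (Fin d) ℝ) (ξ : EuclideanSpace ℝ (Fin d)) :
    qf (t • M) ξ = t * qf M ξ := by
  simp [qf, smul_mulVec]

lemma qf_toEuclideanCLM_transpose (M C : Matrix (Fin d) (Fin d) ℝ)
    (ξ : EuclideanSpace ℝ (Fin d)) :
    qf M (toEuclideanCLM (𝕜 := ℝ) Cᵀ ξ) = qf (C * M * Cᵀ) ξ := by
  simp only [qf, ofLp_toEuclideanCLM, ← mulVec_mulVec, dotProduct_mulVec _ C, ← mulVec_transpose]

lemma Matrix.PosSemidef.qf_nonneg {M : Matrix (Fin d) (Fin d) ℝ} (hM : M.PosSemidef)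
    (ξ : EuclideanSpace ℝ (Fin d)) : 0 ≤ qf M ξ := by
  simpa [qf] using hM.dotProduct_mulVec_nonneg (WithLp.ofLp ξ)

lemma Matrix.PosDef.qf_pos {M : Matrix (Fin d) (Fin d) ℝ} (hM : M.PosDef)
    {ξ : EuclideanSpace ℝ (Fin d)} (hξ : ξ ≠ 0) : 0 < qf M ξ := by
  simpa [qf] using hM.dotProduct_mulVec_pos (x := WithLp.ofLp ξ) (by simpa using hξ)

lemma Matrix.IsSymm.eq_zero_of_qf_eq_zero {S : Matrix (Fin d) (Fin d) ℝ} (hS : S.IsSymm)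
    (h : ∀ ξ, qf S ξ = 0) : S = 0 := by
  have hpolar : ∀ x y : Fin d → ℝ, qf S (WithLp.toLp 2 (x + y)) =
      qf S (WithLp.toLp 2 x) + qf S (WithLp.toLp 2 y) + 2 * (x ⬝ᵥ S *ᵥ y) := by
    intro x y
    have hsymm : y ⬝ᵥ S *ᵥ x = x ⬝ᵥ S *ᵥ y := by
      rw [dotProduct_comm, ← vecMul_transpose, hS.eq, ← dotProduct_mulVec]
    simp only [qf, mulVec_add, add_dotProduct, dotProduct_add, hsymm]
    ring
  ext i j
  have hij := hpolar (Pi.single i 1) (Pi.single j 1)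
  simp only [h, mulVec_single_one, single_dotProduct] at hij
  simpa using hij

end QuadraticForm

section SymmetricPerturbation

open Matrix

variable {d : ℕ}

lemma exists_isSymm_ne_zero_forall_qf_eq_zero {ι : Type*} [Fintype ι]
    (v : ι → EuclideanSpace ℝ (Fin d)) (hcard : Fintype.card ι < (d ^ 2 + d) / 2) :
    ∃ S : Matrix (Fin d) (Fin d) ℝ, S.IsSymm ∧ S ≠ 0 ∧ ∀ i, qf S (v i) = 0 := by
  -- a symmetric matrix is a function on unordered pairs of indices
  let ofSym2 : (Sym2 (Fin d) → ℝ) →ₗ[ℝ] Matrix (Fin d) (Fin d) ℝ :=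
    { toFun := fun c => Matrix.of fun i j => c s(i, j)
      map_add' := fun _ _ => rfl
      map_smul' := fun _ _ => rfl }
  let eval : Matrix (Fin d) (Fin d) ℝ →ₗ[ℝ] ι → ℝ :=
    { toFun := fun S i => qf S (v i)
      map_add' := fun _ _ => funext fun _ => qf_add _ _ _
      map_smul' := fun _ _ => funext fun _ => qf_smul_matrix _ _ _ }
  have hdim : Module.finrank ℝ (ι → ℝ) < Module.finrank ℝ (Sym2 (Fin d) → ℝ) := by
    rw [Module.finrank_fintype_fun_eq_card, Module.finrank_fintype_fun_eq_card, Sym2.card,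
      Fintype.card_fin, Nat.choose_two_right, Nat.add_sub_cancel]
    convert hcard using 2
    ring
  obtain ⟨c, hc, hc0⟩ := Submodule.exists_mem_ne_zero_of_ne_bot
    (LinearMap.ker_ne_bot_of_finrank_lt (f := eval ∘ₗ ofSym2) hdim)
  refine ⟨ofSym2 c, ?_, ?_, fun i => congrFun (LinearMap.mem_ker.mp hc) i⟩
  · exact IsSymm.ext fun i j => congrArg c Sym2.eq_swap
  · intro h
    exact hc0 (funext fun z => Sym2.ind (fun i j => congrFun (congrFun h i) j) z)

lemma Matrix.posDef_of_forall_mem_sphere_qf_pos {M : Matrix (Fin d) (Fin d) ℝ}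
    (hM : M.IsHermitian) (h : ∀ ξ ∈ Metric.sphere (0 : EuclideanSpace ℝ (Fin d)) 1, 0 < qf M ξ) :
    M.PosDef := by
  refine .of_dotProduct_mulVec_pos hM fun x hx => ?_
  set ξ := WithLp.toLp 2 x
  have hξ : 0 < ‖ξ‖ := norm_pos_iff.mpr (by simpa [ξ] using hx)
  have hu : ‖ξ‖⁻¹ • ξ ∈ Metric.sphere (0 : EuclideanSpace ℝ (Fin d)) 1 := by
    simp [norm_smul, hξ.ne']
  have hscale : qf M ξ = ‖ξ‖ ^ 2 * qf M (‖ξ‖⁻¹ • ξ) := by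
    rw [qf_smul, ← mul_assoc, ← mul_pow, mul_inv_cancel₀ hξ.ne', one_pow, one_mul]
  have := mul_pos (pow_pos hξ 2) (h _ hu)
  rwa [← hscale] at this

lemma Matrix.PosDef.exists_ne_zero_add_smul_posDef {M S : Matrix (Fin d) (Fin d) ℝ}
    (hM : M.PosDef) (hS : S.IsSymm) : ∃ ε : ℝ, ε ≠ 0 ∧ (M + ε • S).PosDef := by
  have hcont : Continuous fun p : ℝ × EuclideanSpace ℝ (Fin d) => qf M p.2 + p.1 * qf S p.2 := by
    have := continuous_qf M
    have := continuous_qf S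
    fun_prop
  have hsphere : ∀ᶠ ε in 𝓝 (0 : ℝ), ∀ ξ ∈ Metric.sphere (0 : EuclideanSpace ℝ (Fin d)) 1,
      0 < qf M ξ + ε * qf S ξ :=
    (isCompact_sphere 0 1).eventually_forall_of_forall_eventually fun ξ hξ =>
      hcont.continuousAt.eventually (lt_mem_nhds (by
        simpa using hM.qf_pos (ne_zero_of_mem_sphere one_ne_zero ⟨ξ, hξ⟩)))
  obtain ⟨ε, hε, hε0⟩ :=
    ((hsphere.filter_mono nhdsWithin_le_nhds).and (self_mem_nhdsWithin (s := {0}ᶜ))).exists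
  refine ⟨ε, hε0, posDef_of_forall_mem_sphere_qf_pos ?_ fun ξ hξ => ?_⟩
  · exact isHermitian_iff_isSymm.mpr ((isHermitian_iff_isSymm.mp hM.isHermitian).add (hS.smul ε))
  · simpa [qf_add, qf_smul_matrix] using hε ξ hξ

end SymmetricPerturbation

section Congruence

open Matrix
open scoped MatrixOrder

variable {d : ℕ}

lemma Matrix.PosDef.exists_isUnit_mul_mul_transpose_eq {M N : Matrix (Fin d) (Fin d) ℝ}
    (hM : M.PosDef) (hN : N.PosDef) :
    ∃ C : Matrix (Fin d) (Fin d) ℝ, IsUnit C ∧ C * M * Cᵀ = N := by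
  have hM' := hM.isStrictlyPositive
  have hN' := hN.isStrictlyPositive
  refine ⟨CFC.sqrt N * CFC.sqrt (Ring.inverse M), ?_, ?_⟩
  · exact hN'.isUnit_cfcSqrt.mul hM'.ringInverse.isUnit_cfcSqrt
  · have hsymm : ∀ A : Matrix (Fin d) (Fin d) ℝ, (CFC.sqrt A)ᵀ = CFC.sqrt A := fun A => by
      rw [← conjTranspose_eq_transpose_of_trivial]
      exact (CFC.sqrt_nonneg A).isSelfAdjoint
    rw [transpose_mul, hsymm, hsymm]
    calc CFC.sqrt N * CFC.sqrt (Ring.inverse M) * M * (CFC.sqrt (Ring.inverse M) * CFC.sqrt N)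
        = CFC.conjSqrt N (CFC.conjSqrt (Ring.inverse M) M) := by
          simp only [CFC.conjSqrt_apply, Matrix.mul_assoc]
      _ = N := by rw [CFC.conjSqrt_ringInverse_self M, CFC.conjSqrt_one N]

lemma Matrix.toEuclideanCLM_transpose_eq_adjoint (C : Matrix (Fin d) (Fin d) ℝ) :
    toEuclideanCLM (𝕜 := ℝ) Cᵀ = (toEuclideanCLM (𝕜 := ℝ) C).adjoint := by
  rw [← ContinuousLinearMap.star_eq_adjoint, ← map_star, star_eq_conjTranspose,
    conjTranspose_eq_transpose_of_trivial]

lemma Matrix.injective_toEuclideanCLM {𝕜 n : Type*} [RCLike 𝕜] [Fintype n] [DecidableEq n]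
    {C : Matrix n n 𝕜} (hC : IsUnit C) : Function.Injective (toEuclideanCLM (𝕜 := 𝕜) C) :=
  fun _ _ h => WithLp.ofLp_injective 2 <|
    mulVec_injective_iff_isUnit.mpr hC (by simpa using congrArg WithLp.ofLp h)

end Congruence

section CharFun

variable {E : Type*} [NormedAddCommGroup E] [InnerProductSpace ℝ E] [MeasurableSpace E]
  [BorelSpace E]

lemma charFun_map_continuousLinearMap [CompleteSpace E] {F : Type*} [NormedAddCommGroup F]
    [InnerProductSpace ℝ F] [CompleteSpace F] [MeasurableSpace F] [BorelSpace F]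
    (P : Measure E) (A : E →L[ℝ] F) (ξ : F) :
    charFun (P.map A) ξ = charFun P (A.adjoint ξ) := by
  rw [charFun_apply, charFun_apply, integral_map (by fun_prop) (by fun_prop)]
  simp_rw [ContinuousLinearMap.adjoint_inner_right]

lemma charFun_map_affine [CompleteSpace E] (P : Measure E) (A : E →L[ℝ] E) (ν ξ : E) :
    charFun (P.map fun x => A x + ν) ξ = charFun P (A.adjoint ξ) * cexp (⟪ν, ξ⟫ * I) := by
  rw [show (fun x => A x + ν) = (· + ν) ∘ A from rfl,
    ← Measure.map_map (by fun_prop) (by fun_prop), charFun_map_add_const,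
    charFun_map_continuousLinearMap]

lemma measure_setOf_inner_eq_eq_one_of_charFun {P : Measure E} [IsProbabilityMeasure P]
    {y : E} {c : ℝ} (h : ∀ t : ℝ, charFun P (t • y) = cexp (t * c * I)) :
    P {z | ⟪y, z⟫ = c} = 1 := by
  have hmap : P.map (fun z => ⟪y, z⟫) = Measure.dirac c := by
    refine Measure.ext_of_charFun (funext fun t => ?_)
    rw [charFun_apply, integral_map (by fun_prop) (by fun_prop), charFun_dirac]
    convert h t using 1
    · rw [charFun_apply]
      simp_rw [inner_smul_right, real_inner_comm y]
      simp [mul_comm]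
    · simp [mul_comm]
  have hc := congrArg (fun m : Measure ℝ => m {c}) hmap
  simp only [Measure.dirac_apply_of_mem (Set.mem_singleton c)] at hc
  rwa [Measure.map_apply (by fun_prop) (measurableSet_singleton c)] at hc

lemma map_orthogonalProjectionOnto_eq_of_charFun_eq [CompleteSpace E]
    [SecondCountableTopology E] {P Q : Measure E} [IsFiniteMeasure P] [IsFiniteMeasure Q]
    (L : Submodule ℝ E) [CompleteSpace L] (h : ∀ η ∈ L, charFun P η = charFun Q η) :
    P.map L.orthogonalProjectionOnto = Q.map L.orthogonalProjectionOnto := by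
  refine Measure.ext_of_charFun (funext fun η => ?_)
  rw [charFun_map_continuousLinearMap, charFun_map_continuousLinearMap,
    Submodule.adjoint_orthogonalProjectionOnto]
  exact h _ η.2

end CharFun

lemma eq_apply_zero_of_forall_apply_mul_eq {X : Type*} [TopologicalSpace X] [T2Space X]
    {ψ : ℝ → X} (hψ : ContinuousWithinAt ψ (Set.Ici 0) 0) {a b : ℝ} (ha : 0 ≤ a) (hb : 0 ≤ b)
    (hab : a ≠ b) (h : ∀ s, 0 ≤ s → ψ (a * s) = ψ (b * s)) : ∀ s, 0 ≤ s → ψ s = ψ 0 := by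
  wlog hlt : a < b generalizing a b
  · exact this hb ha hab.symm (fun s hs => (h s hs).symm) (lt_of_le_of_ne (not_lt.mp hlt) hab.symm)
  have hb0 : 0 < b := ha.trans_lt hlt
  set r := a / b
  have hr0 : 0 ≤ r := div_nonneg ha hb0.le
  have hr1 : r < 1 := (div_lt_one hb0).mpr hlt
  have hstep : ∀ s, 0 ≤ s → ψ (r * s) = ψ s := fun s hs => by
    convert h (s / b) (div_nonneg hs hb0.le) using 2
    · exact (div_mul_eq_mul_div a b s).trans (mul_div_assoc a s b)
    · field_simp
  have hiter : ∀ n : ℕ, ∀ s, 0 ≤ s → ψ (r ^ n * s) = ψ s := by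
    intro n
    induction n with
    | zero => simp
    | succ n ih =>
      intro s hs
      rw [pow_succ, mul_assoc, ih _ (mul_nonneg hr0 hs), hstep s hs]
  intro s hs
  have hlim : Tendsto (fun n : ℕ => r ^ n * s) atTop (𝓝[Set.Ici 0] 0) :=
    tendsto_nhdsWithin_iff.mpr ⟨by simpa using
      (tendsto_pow_atTop_nhds_zero_of_lt_one hr0 hr1).mul_const s,
      Eventually.of_forall fun n => mul_nonneg (pow_nonneg hr0 n) hs⟩
  have hconst : Tendsto (fun n : ℕ => ψ (r ^ n * s)) atTop (𝓝 (ψ s)) := by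
    simp only [hiter _ s hs, tendsto_const_nhds]
  exact tendsto_nhds_unique hconst (hψ.tendsto.comp hlim)

section Elliptical

open Matrix

variable {d : ℕ} {P Q : Measure (EuclideanSpace ℝ (Fin d))} {μ : EuclideanSpace ℝ (Fin d)}
  {Sig Sig' : Matrix (Fin d) (Fin d) ℝ} {ψ : ℝ → ℂ}

lemma Nondegenerate.map_affine (hP : Nondegenerate P)
    (A : EuclideanSpace ℝ (Fin d) →L[ℝ] EuclideanSpace ℝ (Fin d))
    (hA : Function.Injective A.adjoint) (ν : EuclideanSpace ℝ (Fin d)) :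
    Nondegenerate (P.map fun x => A x + ν) := by
  intro y hy c
  have hpre : (fun x => A x + ν) ⁻¹' {z | ⟪y, z⟫ = c} =
      {x | ⟪A.adjoint y, x⟫ = c - ⟪y, ν⟫} := by
    ext x
    simp only [Set.mem_preimage, Set.mem_ofPred_eq, inner_add_right,
      ContinuousLinearMap.adjoint_inner_left, eq_sub_iff_add_eq]
  rw [Measure.map_apply (by fun_prop) (measurableSet_eq_fun (by fun_prop) (by fun_prop)), hpre]
  exact hP _ (by simpa using hA.ne hy) _

lemma IsElliptical.map_affine (hP : IsElliptical P μ Sig ψ) (C : Matrix (Fin d) (Fin d) ℝ) :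
    IsElliptical
      (P.map fun x => toEuclideanCLM (𝕜 := ℝ) C x + (μ - toEuclideanCLM (𝕜 := ℝ) C μ))
      μ (C * Sig * Cᵀ) ψ := by
  obtain ⟨hprob, hpsd, hψ, hcf⟩ := hP
  refine ⟨Measure.isProbabilityMeasure_map (by fun_prop), ?_, hψ, fun ξ => ?_⟩
  · simpa [conjTranspose_eq_transpose_of_trivial] using hpsd.mul_mul_conjTranspose_same C
  · rw [cf_eq_charFun, charFun_map_affine, ← cf_eq_charFun, hcf,
      ContinuousLinearMap.adjoint_inner_right, ← toEuclideanCLM_transpose_eq_adjoint,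
      qf_toEuclideanCLM_transpose, mul_right_comm, ← Complex.exp_add, inner_sub_left]
    congr 2
    push_cast
    ring

lemma IsElliptical.psi_zero (hP : IsElliptical P μ Sig ψ) : ψ 0 = 1 := by
  obtain ⟨hprob, -, -, hcf⟩ := hP
  have h0 := hcf 0
  rw [cf_eq_charFun] at h0
  simpa [qf_zero] using h0.symm

lemma IsElliptical.measure_setOf_inner_eq_eq_one (hP : IsElliptical P μ Sig ψ)
    (y : EuclideanSpace ℝ (Fin d)) (h : ∀ t : ℝ, ψ (qf Sig (t • y)) = 1) :
    P {z | ⟪y, z⟫ = ⟪y, μ⟫} = 1 := by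
  obtain ⟨hprob, -, -, hcf⟩ := hP
  refine measure_setOf_inner_eq_eq_one_of_charFun fun t => ?_
  rw [← cf_eq_charFun, hcf, h, mul_one, inner_smul_right, real_inner_comm]
  push_cast
  rfl

lemma IsElliptical.posDef (hP : IsElliptical P μ Sig ψ) (hnd : Nondegenerate P) : Sig.PosDef := by
  have ⟨_, hpsd, _, _⟩ := hP
  refine .of_dotProduct_mulVec_pos hpsd.isHermitian fun x hx => ?_
  refine (hpsd.dotProduct_mulVec_nonneg x).lt_of_ne fun hx0 => ?_
  have hq : qf Sig (WithLp.toLp 2 x) = 0 := by simpa [qf] using hx0.symm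
  refine hnd (WithLp.toLp 2 x) (by simpa using hx) _ (hP.measure_setOf_inner_eq_eq_one _ fun t => ?_)
  rw [qf_smul, hq, mul_zero, hP.psi_zero]

lemma IsElliptical.ne_of_qf_ne (hP : IsElliptical P μ Sig ψ) (hQ : IsElliptical Q μ Sig' ψ)
    (hnd : Nondegenerate P) {w : EuclideanSpace ℝ (Fin d)} (hw : qf Sig w ≠ qf Sig' w) :
    Q ≠ P := by
  rintro rfl
  have ⟨_, hpsd, hψ, hcf⟩ := hP
  have ⟨_, hpsd', _, hcf'⟩ := hQ
  have hscale : ∀ s, 0 ≤ s → ψ (qf Sig w * s) = ψ (qf Sig' w * s) := fun s hs => by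
    have hcfs := (hcf (√s • w)).symm.trans (hcf' (√s • w))
    rwa [qf_smul, qf_smul, Real.sq_sqrt hs, mul_comm s, mul_comm s,
      mul_right_inj' (Complex.exp_ne_zero _)] at hcfs
  have hconst := eq_apply_zero_of_forall_apply_mul_eq (hψ 0 Set.self_mem_Ici)
    (hpsd.qf_nonneg w) (hpsd'.qf_nonneg w) hw hscale
  have hw0 : w ≠ 0 := by
    rintro rfl
    simp [qf_zero] at hw
  exact hnd w hw0 _ (hP.measure_setOf_inner_eq_eq_one w fun t => by
    rw [hconst _ (hpsd.qf_nonneg _), hP.psi_zero])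

lemma IsElliptical.map_orthogonalProjectionOnto_eq (hP : IsElliptical P μ Sig ψ)
    (hQ : IsElliptical Q μ Sig' ψ) (L : Submodule ℝ (EuclideanSpace ℝ (Fin d)))
    (h : ∀ η ∈ L, qf Sig η = qf Sig' η) :
    P.map L.orthogonalProjectionOnto = Q.map L.orthogonalProjectionOnto := by
  obtain ⟨hprob, -, -, hcf⟩ := hP
  obtain ⟨hprob', -, -, hcf'⟩ := hQ
  refine map_orthogonalProjectionOnto_eq_of_charFun_eq L fun η hη => ?_
  rw [← cf_eq_charFun, ← cf_eq_charFun, hcf, hcf', h η hη]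

end Elliptical

/-- If `𝓛` is a set of fewer than `(d² + d)/2` lines, then a non-degenerate
elliptical distribution `P` is not determined by its projections onto the lines
of `𝓛`. -/
theorem sharpness_lines {d : ℕ}
    (P : Measure (EuclideanSpace ℝ (Fin d)))
    (hP : ∃ μ Sig ψ, IsElliptical P μ Sig ψ) (hnd : Nondegenerate P)
    (𝓛 : Finset (Submodule ℝ (EuclideanSpace ℝ (Fin d))))
    (hdim : ∀ L ∈ 𝓛, Module.finrank ℝ L = 1)
    (hcard : 𝓛.card < (d ^ 2 + d) / 2) :
    ∃ Q : Measure (EuclideanSpace ℝ (Fin d)),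
      (∃ μ Sig ψ, IsElliptical Q μ Sig ψ) ∧ Nondegenerate Q ∧ Q ≠ P ∧
      ∀ L ∈ 𝓛, P.map L.orthogonalProjectionOnto = Q.map L.orthogonalProjectionOnto := by
  obtain ⟨μ, Sig, ψ, hP⟩ := hP
  have hSig := hP.posDef hnd
  choose v _ hv using fun L : 𝓛 => finrank_eq_one_iff'.mp (hdim L L.2)
  obtain ⟨S, hSsymm, hS0, hSv⟩ := exists_isSymm_ne_zero_forall_qf_eq_zero
    (fun L : 𝓛 => (v L : EuclideanSpace ℝ (Fin d))) (by simpa using hcard)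
  obtain ⟨w, hw⟩ : ∃ w, qf S w ≠ 0 := by
    by_contra! h
    exact hS0 (hSsymm.eq_zero_of_qf_eq_zero h)
  obtain ⟨ε, hε, hSig'⟩ := hSig.exists_ne_zero_add_smul_posDef hSsymm
  obtain ⟨C, hC, hCSig⟩ := hSig.exists_isUnit_mul_mul_transpose_eq hSig'
  have hQ := hP.map_affine C
  rw [hCSig] at hQ
  refine ⟨_, ⟨μ, _, ψ, hQ⟩, hnd.map_affine _ ?_ _, hP.ne_of_qf_ne hQ hnd (w := w) ?_,
    fun L hL => ?_⟩
  · rw [← Matrix.toEuclideanCLM_transpose_eq_adjoint]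
    exact Matrix.injective_toEuclideanCLM ((Matrix.isUnit_transpose C).mpr hC)
  · simpa [qf_add, qf_smul_matrix, hε] using hw
  · refine hP.map_orthogonalProjectionOnto_eq hQ L fun η hη => ?_
    obtain ⟨c, hc⟩ := hv ⟨L, hL⟩ ⟨η, hη⟩
    rw [← show (c • v ⟨L, hL⟩ : EuclideanSpace ℝ (Fin d)) = η from congrArg Subtype.val hc,
      qf_add, qf_smul_matrix, qf_smul S, hSv, mul_zero, mul_zero, add_zero]
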